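/- Let $(A,\mathfrak{m})$ be a Noetherian local ring and $I$ an ideal. If $x \in I$ is a Rees-superficial element for $I$ and a non-zerodivisor of $A$, then $x$ is a superficial element for $I$, i.e., there exists $c$ such that $(I^{n+1} : x) \cap I^c = I^n$ for all $n \gg 0$. -/
import Mathlib

/-!
STATEMENT 14: (A,m) Noetherian local, I an ideal.  If x ∈ I is Rees-superficial
for I and a non-zerodivisor of A, then x is superficial for I: there exists c
such that (I^{n+1} : x) ∩ I^c = Iⁿ for all n ≫ 0.

x Rees-superficial : ∃ r₀ ≥ 1, (x) ∩ Iʳ·mˢ = x·I^{r-1}·mˢ for all r ≥ r₀, s ≥ 0.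
-/

open IsLocalRing Filter

/-- `x` is a Rees-superficial element for `I`. -/
def IsReesSuperficial {A : Type*} [CommRing A] [IsLocalRing A]
    (I : Ideal A) (x : A) : Prop :=
  x ∈ I ∧ ∃ r₀ : ℕ, 1 ≤ r₀ ∧ ∀ r ≥ r₀, ∀ s : ℕ,
    Ideal.span {x} ⊓ (I ^ r * maximalIdeal A ^ s) =
      Ideal.span {x} * (I ^ (r - 1) * maximalIdeal A ^ s)

theorem stmt14 {A : Type*} [CommRing A] [IsNoetherianRing A] [IsLocalRing A]
    (I : Ideal A) (x : A)
    (hsup : IsReesSuperficial I x)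
    (hreg : x ∈ nonZeroDivisors A) :
    ∃ c : ℕ, ∀ᶠ n : ℕ in atTop,
      (I ^ (n + 1)).colon (Ideal.span {x}) ⊓ I ^ c = I ^ n := by
  obtain ⟨hxI, r₀, hr₀1, h⟩ := hsup
  refine ⟨0, ?_⟩
  filter_upwards [eventually_ge_atTop r₀] with n hn
  have key := h (n + 1) (by omega) 0
  simp only [pow_zero, Ideal.one_eq_top, Ideal.mul_top, Nat.add_sub_cancel] at key
  rw [pow_zero, Ideal.one_eq_top, inf_top_eq]
  apply le_antisymm
  · intro a ha
    rw [Ideal.mem_colon_span_singleton] at ha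
    have hmem : a * x ∈ Ideal.span {x} ⊓ I ^ (n + 1) :=
      ⟨Ideal.mem_span_singleton.2 ⟨a, mul_comm a x⟩, ha⟩
    rw [key] at hmem
    obtain ⟨b, hb, hbx⟩ := Ideal.mem_span_singleton_mul.1 hmem
    have : x * b = x * a := by rw [hbx]; ring
    rwa [← mul_cancel_left_mem_nonZeroDivisors hreg |>.1 this]
  · intro a ha
    rw [Ideal.mem_colon_span_singleton, pow_succ]
    exact Ideal.mul_mem_mul ha hxI
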